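/- Let W : [0,1] → B(H) satisfy the Volterra integral equation W(s) = I + (i/ħ) ∫₀^s K̄(s') W(s') ds' with K̄ continuous and ‖K̄(s)‖ ≤ M. If F(s) = ∫₀^s K̄(s')ds' satisfies ‖F(s)‖ ≤ C/T for all s ∈ [0,1], then ‖W(s) − I‖ ≤ (C/ħT)(1 + (M/ħ) e^{M/ħ}) for all s ∈ [0,1]; in particular W(s) = I + O(1/T). -/

import Mathlib

open MeasureTheory Set Real

/-! Splitting `K W = K + K (W - 1)` in the Volterra equation, the first part integrates to `F`,
so `‖W t - 1‖ ≤ ε + k ∫₀ᵗ ‖W u - 1‖ du` with `ε = C/(ħT)` and `k = M/ħ`. Grönwall's inequality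
in integral form gives `‖W s - 1‖ ≤ ε e^{ks} ≤ ε e^k`, and `e^k ≤ 1 + k e^k` because
`1 - k ≤ e^{-k}`. -/

lemma add_mul_gronwallBound_zero (k ε x : ℝ) :
    ε + k * gronwallBound 0 k ε x = ε * exp (k * x) := by
  rcases eq_or_ne k 0 with rfl | hk
  · simp [gronwallBound_K0]
  · rw [gronwallBound_of_K_ne_0 hk]
    field_simp
    ring

lemma ContinuousOn.hasDerivWithinAt_integral_Icc {E : Type*} [NormedAddCommGroup E]
    [NormedSpace ℝ E] [CompleteSpace E] {g : ℝ → E} {a b t : ℝ}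
    (hg : ContinuousOn g (Icc a b)) (ht : t ∈ Icc a b) :
    HasDerivWithinAt (fun u => ∫ x in a..u, g x) (g t) (Icc a b) t := by
  have := Fact.mk ht
  exact intervalIntegral.integral_hasDerivWithinAt_right
    ((hg.mono (Icc_subset_Icc le_rfl ht.2)).intervalIntegrable_of_Icc ht.1)
    (hg.stronglyMeasurableAtFilter_nhdsWithin measurableSet_Icc t) (hg t ht)

/-- Via the differential form of Grönwall's inequality, applied to `t ↦ ∫ₐᵗ g`. -/
theorem le_mul_exp_of_le_add_mul_integral {g : ℝ → ℝ} {a b k ε : ℝ}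
    (hg : ContinuousOn g (Icc a b)) (hk : 0 ≤ k)
    (h : ∀ t ∈ Icc a b, g t ≤ ε + k * ∫ u in a..t, g u) :
    ∀ t ∈ Icc a b, g t ≤ ε * exp (k * (t - a)) := by
  set f : ℝ → ℝ := fun t => ∫ u in a..t, g u
  have hf : ∀ t ∈ Icc a b, HasDerivWithinAt f (g t) (Icc a b) t := fun t ht =>
    hg.hasDerivWithinAt_integral_Icc ht
  have hf_le : ∀ t ∈ Icc a b, f t ≤ gronwallBound 0 k ε (t - a) := by
    refine le_gronwallBound_of_liminf_deriv_right_le (fun t ht => (hf t ht).continuousWithinAt)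
      (fun t ht _ hr => ((hf t (Ico_subset_Icc_self ht)).mono_of_mem_nhdsWithin
        (Icc_mem_nhdsGE_of_mem ht)).liminf_right_slope_le hr) (by simp [f])
      (fun t ht => ?_)
    linarith [h t (Ico_subset_Icc_self ht)]
  intro t ht
  calc g t ≤ ε + k * f t := h t ht
    _ ≤ ε + k * gronwallBound 0 k ε (t - a) := by gcongr; exact hf_le t ht
    _ = ε * exp (k * (t - a)) := add_mul_gronwallBound_zero k ε (t - a)

lemma exp_le_one_add_mul_exp (k : ℝ) : exp k ≤ 1 + k * exp k := by
  have h := mul_le_mul_of_nonneg_right (one_sub_le_exp_neg k) (exp_pos k).le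
  rw [← exp_add, neg_add_cancel, exp_zero] at h
  linarith

section Volterra

variable {𝕜 A : Type*} [NormedField 𝕜] [NormedRing A] [NormedSpace ℝ A] [NormedSpace 𝕜 A]

lemma norm_integral_mul_le {K V : ℝ → A} {a t M : ℝ} (hat : a ≤ t)
    (hV : ContinuousOn V (Icc a t)) (hM : ∀ u ∈ Icc a t, ‖K u‖ ≤ M) :
    ‖∫ u in a..t, K u * V u‖ ≤ M * ∫ u in a..t, ‖V u‖ := by
  rw [← intervalIntegral.integral_const_mul]
  refine intervalIntegral.norm_integral_le_of_norm_le hat (.of_forall fun u hu => ?_)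
    ((hV.norm.intervalIntegrable_of_Icc hat).const_mul M)
  exact (norm_mul_le _ _).trans (by gcongr; exact hM u (Ioc_subset_Icc_self hu))

lemma norm_sub_one_le_of_eq_one_add_smul_integral {K W : ℝ → A} {c : 𝕜} {a t M : ℝ}
    (hat : a ≤ t) (hK : ContinuousOn K (Icc a t)) (hW : ContinuousOn W (Icc a t))
    (hM : ∀ u ∈ Icc a t, ‖K u‖ ≤ M) (hVolt : W t = 1 + c • ∫ u in a..t, K u * W u) :
    ‖W t - 1‖ ≤ ‖c‖ * (‖∫ u in a..t, K u‖ + M * ∫ u in a..t, ‖W u - 1‖) := by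
  have hW1 : ContinuousOn (fun u => W u - 1) (Icc a t) := hW.sub continuousOn_const
  have hKW1 : IntervalIntegrable (fun u => K u * (W u - 1)) volume a t :=
    (hK.mul hW1).intervalIntegrable_of_Icc hat
  have hsplit : ∫ u in a..t, K u * W u
      = (∫ u in a..t, K u) + ∫ u in a..t, K u * (W u - 1) := by
    rw [← intervalIntegral.integral_add (hK.intervalIntegrable_of_Icc hat) hKW1]
    simp only [mul_sub, mul_one, add_sub_cancel]
  calc ‖W t - 1‖ = ‖c • ((∫ u in a..t, K u) + ∫ u in a..t, K u * (W u - 1))‖ := by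
        rw [hVolt, add_sub_cancel_left, hsplit]
    _ ≤ ‖c‖ * (‖∫ u in a..t, K u‖ + ‖∫ u in a..t, K u * (W u - 1)‖) :=
        (norm_smul_le _ _).trans (by gcongr; exact norm_add_le _ _)
    _ ≤ ‖c‖ * (‖∫ u in a..t, K u‖ + M * ∫ u in a..t, ‖W u - 1‖) := by
        gcongr; exact norm_integral_mul_le hat hW1 hM

end Volterra

theorem volterra_solution_near_identity_general {H : Type*} [NormedAddCommGroup H]
    [InnerProductSpace ℂ H]
    (hbar T C M : ℝ) (h_hbar : 0 < hbar)
    (K W : ℝ → (H →L[ℂ] H))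
    (hKcont : ContinuousOn K (Set.Icc (0:ℝ) 1))
    (hWcont : ContinuousOn W (Set.Icc (0:ℝ) 1))
    (hM : ∀ s ∈ Set.Icc (0:ℝ) 1, ‖K s‖ ≤ M)
    (hVolt : ∀ s ∈ Set.Icc (0:ℝ) 1,
      W s = 1 + (Complex.I / (hbar : ℂ)) • (∫ t in (0:ℝ)..s, K t * W t))
    (hF : ∀ s ∈ Set.Icc (0:ℝ) 1, ‖∫ t in (0:ℝ)..s, K t‖ ≤ C / T) :
    ∀ s ∈ Set.Icc (0:ℝ) 1,
      ‖W s - 1‖ ≤ (C / (hbar * T)) * (1 + (M / hbar) * Real.exp (M / hbar)) := by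
  intro s hs
  have hM0 : 0 ≤ M := (norm_nonneg _).trans (hM 0 ⟨le_rfl, zero_le_one⟩)
  have hCT : 0 ≤ C / T := by simpa using hF 0 ⟨le_rfl, zero_le_one⟩
  have hε : 0 ≤ C / (hbar * T) := by rw [mul_comm, ← div_div]; positivity
  have hc : ‖Complex.I / (hbar : ℂ)‖ = hbar⁻¹ := by simp [abs_of_pos h_hbar]
  have hintegral_ineq : ∀ t ∈ Icc (0:ℝ) 1,
      ‖W t - 1‖ ≤ C / (hbar * T) + M / hbar * ∫ u in (0:ℝ)..t, ‖W u - 1‖ := by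
    intro t ht
    have hsub : Icc 0 t ⊆ Icc 0 1 := Icc_subset_Icc_right ht.2
    calc ‖W t - 1‖ ≤ hbar⁻¹ * (‖∫ u in (0:ℝ)..t, K u‖ + M * ∫ u in (0:ℝ)..t, ‖W u - 1‖) :=
          hc ▸ norm_sub_one_le_of_eq_one_add_smul_integral ht.1 (hKcont.mono hsub)
            (hWcont.mono hsub) (fun u hu => hM u (hsub hu)) (hVolt t ht)
      _ ≤ hbar⁻¹ * (C / T + M * ∫ u in (0:ℝ)..t, ‖W u - 1‖) := by gcongr; exact hF t ht
      _ = C / (hbar * T) + M / hbar * ∫ u in (0:ℝ)..t, ‖W u - 1‖ := by field_simp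
  calc ‖W s - 1‖ ≤ C / (hbar * T) * exp (M / hbar * (s - 0)) :=
        le_mul_exp_of_le_add_mul_integral (hWcont.sub continuousOn_const).norm (by positivity)
          hintegral_ineq s hs
    _ ≤ C / (hbar * T) * exp (M / hbar) := by
        gcongr; exact mul_le_of_le_one_right (by positivity) (by linarith [hs.2])
    _ ≤ C / (hbar * T) * (1 + M / hbar * exp (M / hbar)) := by
        gcongr; exact exp_le_one_add_mul_exp _

/-- Let `W` solve the Volterra equation
`W(s) = I + (i/ħ)∫₀ˢ K̄(s')W(s')ds'` with `K̄` continuous and `‖K̄(s)‖ ≤ M`. If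
`F(s) = ∫₀ˢ K̄` satisfies `‖F(s)‖ ≤ C/T`, then
`‖W(s) − I‖ ≤ (C/(ħT))(1 + (M/ħ)e^{M/ħ})` on `[0,1]`; in particular `W(s) = I + O(1/T)`. -/
theorem volterra_solution_near_identity {H : Type*} [NormedAddCommGroup H]
    [InnerProductSpace ℂ H] [CompleteSpace H]
    (hbar T C M : ℝ) (h_hbar : 0 < hbar) (hT : 0 < T)
    (K W : ℝ → (H →L[ℂ] H))
    (hKcont : ContinuousOn K (Set.Icc (0:ℝ) 1))
    (hWcont : ContinuousOn W (Set.Icc (0:ℝ) 1))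
    (hM : ∀ s ∈ Set.Icc (0:ℝ) 1, ‖K s‖ ≤ M)
    (hVolt : ∀ s ∈ Set.Icc (0:ℝ) 1,
      W s = 1 + (Complex.I / (hbar : ℂ)) • (∫ t in (0:ℝ)..s, K t * W t))
    (hF : ∀ s ∈ Set.Icc (0:ℝ) 1, ‖∫ t in (0:ℝ)..s, K t‖ ≤ C / T) :
    ∀ s ∈ Set.Icc (0:ℝ) 1,
      ‖W s - 1‖ ≤ (C / (hbar * T)) * (1 + (M / hbar) * Real.exp (M / hbar)) :=
  volterra_solution_near_identity_general hbar T C M h_hbar K W hKcont hWcont hM hVolt hF
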